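/- arXiv:1509.05205 — 2 statements merged into one kernel-verified Lean document; each statement's English description precedes it below -/
import Mathlib

section
/- Let G be a group, H a normal subgroup of index 2, X a generating set of G, and u an element of G with u ∉ H. Then H is generated by the set {x·u : x ∈ X, x·u ∈ H} ∪ {u⁻¹·x : x ∈ X, u⁻¹·x ∈ H} ∪ {x : x ∈ X, x ∈ H} ∪ {u⁻¹·x·u : x ∈ X, x ∈ H}. -/
/-!
Since `H` has index two and `u⁻¹ ∉ H`, the set `{1, u⁻¹}` is a right transversal of `H`
containing `1`, so Schreier's lemma `Subgroup.closure_mul_image_eq` applies. Its generators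
are `g * t(g)⁻¹` for `g ∈ {1, u⁻¹} * X`, where the representative `t(g)` is `1` for `g ∈ H`
and `u⁻¹` otherwise; these are exactly the four families of the statement.
-/

open scoped Pointwise

namespace Subgroup

variable {G : Type*} [Group G] {H : Subgroup G} {v : G}

theorem isComplement_one_pair_of_index_eq_two (hH : H.index = 2) (hv : v ∉ H) :
    IsComplement (H : Set G) {1, v} := by
  refine isComplement_iff_existsUnique_mul_inv_mem.2 fun g => ?_
  by_cases hg : g ∈ H
  · refine ⟨⟨1, by simp⟩, by simpa using hg, ?_⟩
    rintro ⟨t, rfl | rfl⟩ ht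
    · rfl
    · exact absurd ((H.mul_mem_cancel_left hg).1 ht) (by simpa using hv)
  · refine ⟨⟨v, by simp⟩, ?_, ?_⟩
    · simp [mul_mem_iff_of_index_two hH, hg, hv]
    rintro ⟨t, rfl | rfl⟩ ht
    · exact absurd (by simpa using ht) hg
    · rfl

namespace IsComplement

variable {g : G}

theorem toRightFun_one_pair_of_mem (hR : IsComplement (H : Set G) {1, v}) (hv : v ∉ H)
    (hg : g ∈ H) : (hR.toRightFun g : G) = 1 := by
  have hmem := hR.mul_inv_toRightFun_mem g
  rcases (hR.toRightFun g).2 with ht | ht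
  · exact ht
  · rw [Set.mem_singleton_iff.1 ht] at hmem
    exact absurd (by simpa using (H.mul_mem_cancel_left hg).1 hmem) hv

theorem toRightFun_one_pair_of_notMem (hR : IsComplement (H : Set G) {1, v}) (hg : g ∉ H) :
    (hR.toRightFun g : G) = v := by
  have hmem := hR.mul_inv_toRightFun_mem g
  rcases (hR.toRightFun g).2 with ht | ht
  · rw [ht] at hmem
    exact absurd (by simpa using hmem) hg
  · exact ht

end IsComplement

theorem image_mul_inv_toRightFun_one_inv_pair (hH : H.index = 2) {u : G} (hu : u ∉ H)
    (hR : IsComplement (H : Set G) {1, u⁻¹}) (X : Set G) :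
    (({1, u⁻¹} : Set G) * X).image (fun g => g * (hR.toRightFun g : G)⁻¹) =
      {g | ∃ x ∈ X, g = x * u ∧ g ∈ H} ∪ {g | ∃ x ∈ X, g = u⁻¹ * x ∧ g ∈ H} ∪
        {g | g ∈ X ∧ g ∈ H} ∪ {g | ∃ x ∈ X, x ∈ H ∧ g = u⁻¹ * x * u} := by
  have hu' : u⁻¹ ∉ H := by simpa using hu
  have of_mem {g : G} (hg : g ∈ H) : g * (hR.toRightFun g : G)⁻¹ = g := by
    simp [hR.toRightFun_one_pair_of_mem hu' hg]
  have of_notMem {g : G} (hg : g ∉ H) : g * (hR.toRightFun g : G)⁻¹ = g * u := by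
    simp [hR.toRightFun_one_pair_of_notMem hg]
  ext g
  simp only [Set.mem_image, Set.mem_mul, Set.mem_insert_iff, Set.mem_singleton_iff,
    Set.mem_union, Set.mem_ofPred_eq]
  constructor
  · rintro ⟨_, ⟨r, rfl | rfl, x, hx, rfl⟩, rfl⟩
    · rw [one_mul]
      by_cases hxH : x ∈ H
      · exact Or.inl (Or.inr ⟨by rwa [of_mem hxH], by rwa [of_mem hxH]⟩)
      · rw [of_notMem hxH]
        have hxu : x * u ∈ H := by simp [mul_mem_iff_of_index_two hH, hxH, hu]
        exact Or.inl (Or.inl (Or.inl ⟨x, hx, rfl, hxu⟩))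
    · by_cases hxH : u⁻¹ * x ∈ H
      · exact Or.inl (Or.inl (Or.inr ⟨x, hx, of_mem hxH, by rwa [of_mem hxH]⟩))
      · have hx' : x ∈ H := by simpa [mul_mem_iff_of_index_two hH, hu] using hxH
        exact Or.inr ⟨x, hx, hx', of_notMem hxH⟩
  · rintro (((⟨x, hx, rfl, hg⟩ | ⟨x, hx, rfl, hg⟩) | ⟨hx, hg⟩) | ⟨x, hx, hxH, rfl⟩)
    · have hxH : x ∉ H := fun hxH => hu ((H.mul_mem_cancel_left hxH).1 hg)
      exact ⟨x, ⟨1, Or.inl rfl, x, hx, one_mul x⟩, of_notMem hxH⟩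
    · exact ⟨u⁻¹ * x, ⟨u⁻¹, Or.inr rfl, x, hx, rfl⟩, of_mem hg⟩
    · exact ⟨g, ⟨1, Or.inl rfl, g, hx, one_mul g⟩, of_mem hg⟩
    · have hxH' : u⁻¹ * x ∉ H := fun h => hu' ((H.mul_mem_cancel_right hxH).1 h)
      exact ⟨u⁻¹ * x, ⟨u⁻¹, Or.inr rfl, x, hx, rfl⟩, of_notMem hxH'⟩

end Subgroup

theorem reidemeister_schreier_index_two_general (G : Type*) [Group G] (H : Subgroup G)
    (hH : H.index = 2) (X : Set G) (hX : Subgroup.closure X = ⊤)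
    (u : G) (hu : u ∉ H) :
    Subgroup.closure
      ({g | ∃ x ∈ X, g = x * u ∧ g ∈ H} ∪
       {g | ∃ x ∈ X, g = u⁻¹ * x ∧ g ∈ H} ∪
       {g | g ∈ X ∧ g ∈ H} ∪
       {g | ∃ x ∈ X, x ∈ H ∧ g = u⁻¹ * x * u}) = H := by
  have hR := Subgroup.isComplement_one_pair_of_index_eq_two hH (inv_mem_iff.not.2 hu)
  rw [← Subgroup.image_mul_inv_toRightFun_one_inv_pair hH hu hR]
  exact Subgroup.closure_mul_image_eq hR (Set.mem_insert 1 _) hX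

/-- Reidemeister–Schreier for an index-2 subgroup with Schreier transversal `{1, u}`:
if `G` is generated by `X`, `H` is a normal subgroup of index 2 and `u ∉ H`, then `H`
is generated by the elements `x·u`, `u⁻¹·x`, `x` and `u⁻¹·x·u` (for `x ∈ X`) that lie
in `H`. -/
theorem reidemeister_schreier_index_two (G : Type*) [Group G] (H : Subgroup G)
    [H.Normal] (hH : H.index = 2) (X : Set G) (hX : Subgroup.closure X = ⊤)
    (u : G) (hu : u ∉ H) :
    Subgroup.closure
      ({g | ∃ x ∈ X, g = x * u ∧ g ∈ H} ∪
       {g | ∃ x ∈ X, g = u⁻¹ * x ∧ g ∈ H} ∪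
       {g | g ∈ X ∧ g ∈ H} ∪
       {g | ∃ x ∈ X, x ∈ H ∧ g = u⁻¹ * x * u}) = H :=
  reidemeister_schreier_index_two_general G H hH X hX u hu
end

section
/- The level 2 congruence subgroup PSL(2,ℤ)[2] of PSL(2,ℤ) is a free group of rank 2, generated by the images of the matrices [[1,2],[0,1]] and [[1,0],[2,1]]. -/
open Matrix

/-- The reduction map `SL(2,ℤ) → SL(2,ℤ/2ℤ)`. -/
noncomputable abbrev SL2Red : SpecialLinearGroup (Fin 2) ℤ →* SpecialLinearGroup (Fin 2) (ZMod 2) :=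
  SpecialLinearGroup.map (Int.castRingHom (ZMod 2))

/-- The level 2 principal congruence subgroup `SL(2,ℤ)[2]`. -/
noncomputable abbrev SL2Level2 : Subgroup (SpecialLinearGroup (Fin 2) ℤ) := SL2Red.ker

/-- `PSL(2,ℤ)`, the quotient of `SL(2,ℤ)` by its center `{±E}`. -/
noncomputable abbrev PSL2Z :=
  SpecialLinearGroup (Fin 2) ℤ ⧸ Subgroup.center (SpecialLinearGroup (Fin 2) ℤ)

noncomputable abbrev toPSL2Z : SpecialLinearGroup (Fin 2) ℤ →* PSL2Z :=
  QuotientGroup.mk' (Subgroup.center (SpecialLinearGroup (Fin 2) ℤ))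

/-- The level 2 congruence subgroup of `PSL(2,ℤ)`, the image of `SL(2,ℤ)[2]`. -/
noncomputable abbrev PSL2Level2 : Subgroup PSL2Z := SL2Level2.map toPSL2Z

/-- The matrix `[[1,2],[0,1]]` as an element of `SL(2,ℤ)`. -/
def matA : SpecialLinearGroup (Fin 2) ℤ :=
  ⟨!![1, 2; 0, 1], by norm_num [Matrix.det_fin_two_of]⟩

/-- The matrix `[[1,0],[2,1]]` as an element of `SL(2,ℤ)`. -/
def matB : SpecialLinearGroup (Fin 2) ℤ :=
  ⟨!![1, 0; 2, 1], by norm_num [Matrix.det_fin_two_of]⟩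

/-!
Generation. For `M ∈ SL(2,ℤ)[2]` with first column `(a, c)`, `a` is odd and `c` even, so
`|a| ≠ |c|`. Left multiplication by `A ^ k` (resp. `B ^ k`) replaces `a` by `a + 2kc`
(resp. `c` by `c + 2ka`), and a balanced division makes the larger of `|a|`, `|c|` smaller.
This descent ends at `c = 0`, where `M = ±A ^ k`. Hence `SL(2,ℤ)[2] = ⟨-1, A, B⟩`.

Freeness. `SL(2,ℤ)` acts on `ℙ¹(ℚ)` by Möbius transformations, `-1` acting trivially, so the action
factors through `PSL(2,ℤ)`. There `A : z ↦ z + 2` and `B : z ↦ z / (2z + 1)` play ping-pong on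
the partition of `ℙ¹(ℚ)` into `[1, ∞]`, `(0, 1)`, `[-1, 0]` and `(-∞, -1)`.
-/

open scoped MatrixGroups Pointwise Function
open OnePoint
open Matrix.SpecialLinearGroup (mapGL)

lemma Int.exists_natAbs_add_two_mul_mul_le {c : ℤ} (hc : c ≠ 0) (a : ℤ) :
    ∃ k, (a + 2 * k * c).natAbs ≤ c.natAbs := by
  have hpos : 0 < (2 * c).natAbs := by omega
  obtain ⟨k, hk⟩ := Int.natAbs_dvd.mp (Int.dvd_bmod_sub_self (x := a) (m := (2 * c).natAbs))
  refine ⟨k, ?_⟩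
  rw [show a + 2 * k * c = a.bmod (2 * c).natAbs by linarith]
  have := Int.le_bmod (x := a) hpos
  have := Int.bmod_le (x := a) hpos
  omega

lemma Set.inv_smul_compl_subset_of_smul_compl_subset {G α : Type*} [Group G] [MulAction G α]
    {g : G} {s t : Set α} (h : g • sᶜ ⊆ t) : g⁻¹ • tᶜ ⊆ s := by
  rw [Set.smul_set_subset_iff_subset_inv_smul_set, inv_inv, Set.compl_subset_comm,
    ← Set.smul_set_compl]
  exact h

lemma pairwise_on_fin_two {α : Type*} {r : α → α → Prop} [Std.Symm r] {a b : α} :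
    Pairwise (r on ![a, b]) ↔ r a b := by
  refine ⟨fun h => h Fin.zero_ne_one, fun h i j hij => ?_⟩
  fin_cases i <;> fin_cases j
  exacts [absurd rfl hij, h, Std.Symm.symm _ _ h, absurd rfl hij]

lemma coe_matA : (matA : Matrix (Fin 2) (Fin 2) ℤ) = !![1, 2; 0, 1] := rfl

lemma coe_matB : (matB : Matrix (Fin 2) (Fin 2) ℤ) = !![1, 0; 2, 1] := rfl

lemma coe_matA_zpow (k : ℤ) :
    ((matA ^ k : SL(2, ℤ)) : Matrix (Fin 2) (Fin 2) ℤ) = !![1, 2 * k; 0, 1] := by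
  induction k using Int.induction_on with
  | zero => simp [one_fin_two]
  | succ n ih =>
    rw [_root_.zpow_add_one, Matrix.SpecialLinearGroup.coe_mul, ih, coe_matA, mul_fin_two]
    congrm !![?_, ?_; ?_, ?_] <;> ring
  | pred n ih =>
    rw [_root_.zpow_sub_one, Matrix.SpecialLinearGroup.coe_mul, Matrix.SpecialLinearGroup.coe_inv,
      ih, coe_matA, adjugate_fin_two_of, mul_fin_two]
    congrm !![?_, ?_; ?_, ?_] <;> ring

lemma coe_matB_zpow (k : ℤ) :
    ((matB ^ k : SL(2, ℤ)) : Matrix (Fin 2) (Fin 2) ℤ) = !![1, 0; 2 * k, 1] := by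
  induction k using Int.induction_on with
  | zero => simp [one_fin_two]
  | succ n ih =>
    rw [_root_.zpow_add_one, Matrix.SpecialLinearGroup.coe_mul, ih, coe_matB, mul_fin_two]
    congrm !![?_, ?_; ?_, ?_] <;> ring
  | pred n ih =>
    rw [_root_.zpow_sub_one, Matrix.SpecialLinearGroup.coe_mul, Matrix.SpecialLinearGroup.coe_inv,
      ih, coe_matB, adjugate_fin_two_of, mul_fin_two]
    congrm !![?_, ?_; ?_, ?_] <;> ring

lemma matA_zpow_mul_apply (k : ℤ) (M : SL(2, ℤ)) :
    (matA ^ k * M) 0 0 = M 0 0 + 2 * k * M 1 0 ∧ (matA ^ k * M) 1 0 = M 1 0 := by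
  simp [coe_matA_zpow, mul_apply, Fin.sum_univ_two]

lemma matB_zpow_mul_apply (k : ℤ) (M : SL(2, ℤ)) :
    (matB ^ k * M) 0 0 = M 0 0 ∧ (matB ^ k * M) 1 0 = M 1 0 + 2 * k * M 0 0 := by
  simp [coe_matB_zpow, mul_apply, Fin.sum_univ_two, add_comm]

lemma mem_SL2Level2_iff {M : SL(2, ℤ)} :
    M ∈ SL2Level2 ↔ Odd (M 0 0) ∧ Even (M 0 1) ∧ Even (M 1 0) ∧ Odd (M 1 1) := by
  simp only [show SL2Level2 = CongruenceSubgroup.Gamma 2 from rfl, CongruenceSubgroup.Gamma_mem,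
    ZMod.intCast_eq_one_iff_odd, ZMod.intCast_eq_zero_iff_even]

lemma matA_mem_SL2Level2 : matA ∈ SL2Level2 :=
  mem_SL2Level2_iff.mpr (by simp [coe_matA])

lemma matB_mem_SL2Level2 : matB ∈ SL2Level2 :=
  mem_SL2Level2_iff.mpr (by simp [coe_matB])

lemma neg_one_mem_SL2Level2 : (-1 : SL(2, ℤ)) ∈ SL2Level2 :=
  mem_SL2Level2_iff.mpr (by simp [Matrix.SpecialLinearGroup.coe_neg])

lemma SL2_det_apply {M : SL(2, ℤ)} :
    M 0 0 * M 1 1 - M 0 1 * M 1 0 = 1 := by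
  rw [← det_fin_two]
  exact M.det_coe

lemma eq_matA_zpow {M : SL(2, ℤ)} {k : ℤ} (h00 : M 0 0 = 1) (h01 : M 0 1 = 2 * k)
    (h10 : M 1 0 = 0) : M = matA ^ k := by
  have h11 : M 1 1 = 1 := by
    simpa [h00, h10] using SL2_det_apply (M := M)
  ext i j
  fin_cases i <;> fin_cases j <;> simp [coe_matA_zpow, h00, h01, h10, h11]

lemma mem_of_mem_SL2Level2_of_apply_one_zero_eq_zero {K : Subgroup SL(2, ℤ)} (hA : matA ∈ K)
    (hneg : -1 ∈ K) {M : SL(2, ℤ)} (hM : M ∈ SL2Level2) (hc : M 1 0 = 0) : M ∈ K := by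
  obtain ⟨k, hk⟩ := even_iff_two_dvd.mp (mem_SL2Level2_iff.mp hM).2.1
  have had : M 0 0 * M 1 1 = 1 := by
    simpa [hc] using SL2_det_apply (M := M)
  rcases Int.eq_one_or_neg_one_of_mul_eq_one had with ha | ha
  · rw [eq_matA_zpow ha hk hc]
    exact zpow_mem hA k
  · have hM' : -M = matA ^ (-k) := by
      refine eq_matA_zpow ?_ ?_ ?_ <;> simp [Matrix.SpecialLinearGroup.coe_neg, ha, hk, hc]
    rw [← neg_neg M, hM', ← neg_one_mul]
    exact mul_mem hneg (zpow_mem hA _)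

lemma SL2Level2_le_of_mem {K : Subgroup SL(2, ℤ)} (hA : matA ∈ K) (hB : matB ∈ K)
    (hneg : -1 ∈ K) : SL2Level2 ≤ K := by
  intro M hM
  induction hn : (M 0 0).natAbs + (M 1 0).natAbs using Nat.strong_induction_on generalizing M with
  | _ n ih =>
  rcases eq_or_ne (M 1 0) 0 with hc | hc
  · exact mem_of_mem_SL2Level2_of_apply_one_zero_eq_zero hA hneg hM hc
  obtain ⟨ha, -, hc', -⟩ := mem_SL2Level2_iff.mp hM
  rw [Int.odd_iff] at ha
  rw [Int.even_iff] at hc'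
  rcases lt_or_gt_of_ne (show (M 0 0).natAbs ≠ (M 1 0).natAbs by omega) with hlt | hlt
  · obtain ⟨k, hk⟩ := Int.exists_natAbs_add_two_mul_mul_le (c := M 0 0) (by omega) (M 1 0)
    have hN : matB ^ k * M ∈ K := by
      refine ih _ ?_ (mul_mem (zpow_mem matB_mem_SL2Level2 k) hM) rfl
      rw [(matB_zpow_mul_apply k M).1, (matB_zpow_mul_apply k M).2]
      omega
    simpa using mul_mem (zpow_mem hB (-k)) hN
  · obtain ⟨k, hk⟩ := Int.exists_natAbs_add_two_mul_mul_le hc (M 0 0)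
    have hN : matA ^ k * M ∈ K := by
      refine ih _ ?_ (mul_mem (zpow_mem matA_mem_SL2Level2 k) hM) rfl
      rw [(matA_zpow_mul_apply k M).1, (matA_zpow_mul_apply k M).2]
      omega
    simpa using mul_mem (zpow_mem hA (-k)) hN

lemma neg_one_mem_center : (-1 : SL(2, ℤ)) ∈ Subgroup.center SL(2, ℤ) :=
  Subgroup.mem_center_iff.mpr fun g => by ext i j; simp [Matrix.SpecialLinearGroup.coe_neg]

lemma SL2Level2_eq_closure : SL2Level2 = Subgroup.closure {-1, matA, matB} := by
  refine le_antisymm (SL2Level2_le_of_mem ?_ ?_ ?_) ((Subgroup.closure_le _).mpr ?_)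
  · exact Subgroup.subset_closure (by simp)
  · exact Subgroup.subset_closure (by simp)
  · exact Subgroup.subset_closure (by simp)
  · rintro _ (rfl | rfl | rfl)
    exacts [neg_one_mem_SL2Level2, matA_mem_SL2Level2, matB_mem_SL2Level2]

lemma PSL2Level2_eq_closure : PSL2Level2 = Subgroup.closure {toPSL2Z matA, toPSL2Z matB} := by
  have h : toPSL2Z (-1) = 1 := (QuotientGroup.eq_one_iff _).mpr neg_one_mem_center
  rw [PSL2Level2, SL2Level2_eq_closure, MonoidHom.map_closure, Set.image_insert_eq,
    Set.image_pair, h, Subgroup.closure_insert_one]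

lemma mapGL_matA_smul_infty : mapGL ℚ matA • (∞ : OnePoint ℚ) = ∞ := by
  simp [smul_infty_eq_ite, coe_matA]

lemma mapGL_matA_smul_coe (q : ℚ) : mapGL ℚ matA • (q : OnePoint ℚ) = ↑(q + 2) := by
  simp [smul_some_eq_ite, coe_matA]

lemma mapGL_matB_smul_infty : mapGL ℚ matB • (∞ : OnePoint ℚ) = ↑(1 / 2 : ℚ) := by
  simp [smul_infty_eq_ite, coe_matB]

lemma mapGL_matB_smul_coe {q : ℚ} (hq : 2 * q + 1 ≠ 0) :
    mapGL ℚ matB • (q : OnePoint ℚ) = ↑(q / (2 * q + 1)) := by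
  simp [smul_some_eq_ite, coe_matB, hq]

lemma mapGL_smul_eq_self_of_mem_center {M : SL(2, ℤ)} (hM : M ∈ Subgroup.center SL(2, ℤ))
    (p : OnePoint ℚ) : mapGL ℚ M • p = p := by
  obtain ⟨r, -, hrM⟩ := Matrix.SpecialLinearGroup.mem_center_iff.mp hM
  have hentry : ∀ i j, M i j = if i = j then r else 0 := fun i j => by
    rw [← hrM, Matrix.scalar_apply, Matrix.diagonal_apply]
  have hr : (r : ℚ) ≠ 0 :=
    Int.cast_ne_zero.mpr (by rintro rfl; simpa [hentry] using SL2_det_apply (M := M))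
  induction p using OnePoint.rec with
  | infty => simp [smul_infty_eq_ite, hentry]
  | coe q => simp [smul_some_eq_ite, hentry, hr]

noncomputable def moebiusPSL2Z : PSL2Z →* Equiv.Perm (OnePoint ℚ) :=
  QuotientGroup.lift _ ((MulAction.toPermHom (GL (Fin 2) ℚ) (OnePoint ℚ)).comp (mapGL ℚ))
    fun _ hM => MonoidHom.mem_ker.mpr (Equiv.ext (mapGL_smul_eq_self_of_mem_center hM))

def pingPongX : Fin 2 → Set (OnePoint ℚ) :=
  ![insert ∞ (((↑) : ℚ → OnePoint ℚ) '' Set.Ici 1), ((↑) : ℚ → OnePoint ℚ) '' Set.Ioo 0 1]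

def pingPongY : Fin 2 → Set (OnePoint ℚ) :=
  ![((↑) : ℚ → OnePoint ℚ) '' Set.Iio (-1), ((↑) : ℚ → OnePoint ℚ) '' Set.Icc (-1) 0]

lemma pingPongX_nonempty (i : Fin 2) : (pingPongX i).Nonempty := by
  fin_cases i
  · exact ⟨∞, Set.mem_insert _ _⟩
  · exact ⟨_, Set.mem_image_of_mem _ (show (1 / 2 : ℚ) ∈ Set.Ioo 0 1 by norm_num)⟩

lemma disjoint_pingPongX_pingPongY (i j : Fin 2) : Disjoint (pingPongX i) (pingPongY j) := by
  fin_cases i <;> fin_cases j <;>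
    simp [pingPongX, pingPongY, Set.disjoint_image_iff OnePoint.coe_injective, Set.disjoint_left] <;>
    intros <;> linarith

lemma pairwise_disjoint_pingPongX : Pairwise (Disjoint on pingPongX) :=
  pairwise_on_fin_two.mpr <| by simp [Set.disjoint_left]; intros; linarith

lemma pairwise_disjoint_pingPongY : Pairwise (Disjoint on pingPongY) :=
  pairwise_on_fin_two.mpr <| by
    simp [Set.disjoint_image_iff OnePoint.coe_injective, Set.disjoint_left]; intros; linarith

lemma mapGL_matA_smul_mem_pingPongX {p : OnePoint ℚ} (hp : p ∉ pingPongY 0) :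
    mapGL ℚ matA • p ∈ pingPongX 0 := by
  induction p using OnePoint.rec with
  | infty => simp [mapGL_matA_smul_infty, pingPongX]
  | coe q =>
    have hq : ¬q < -1 := fun h => hp ⟨q, h, rfl⟩
    rw [mapGL_matA_smul_coe]
    exact Set.mem_insert_of_mem _ ⟨q + 2, Set.mem_Ici.mpr (by linarith), rfl⟩

lemma mapGL_matB_smul_mem_pingPongX {p : OnePoint ℚ} (hp : p ∉ pingPongY 1) :
    mapGL ℚ matB • p ∈ pingPongX 1 := by
  induction p using OnePoint.rec with
  | infty =>
    rw [mapGL_matB_smul_infty]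
    exact Set.mem_image_of_mem _ (show (1 / 2 : ℚ) ∈ Set.Ioo 0 1 by norm_num)
  | coe q =>
    have hq : q < -1 ∨ 0 < q := by
      by_contra! h
      exact hp ⟨q, h, rfl⟩
    rw [mapGL_matB_smul_coe (by rcases hq with hq | hq <;> linarith)]
    refine ⟨_, ?_, rfl⟩
    rcases hq with hq | hq
    · have hd : 2 * q + 1 < 0 := by linarith
      exact ⟨div_pos_of_neg_of_neg (by linarith) hd, (div_lt_one_of_neg hd).mpr (by linarith)⟩
    · have hd : 0 < 2 * q + 1 := by linarith
      exact ⟨div_pos hq hd, (div_lt_one hd).mpr (by linarith)⟩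

lemma injective_lift_toPSL2Z :
    Function.Injective (FreeGroup.lift ![toPSL2Z matA, toPSL2Z matB]) := by
  set g : Fin 2 → PSL2Z := ![toPSL2Z matA, toPSL2Z matB]
  have hX : ∀ i, (moebiusPSL2Z ∘ g) i • (pingPongY i)ᶜ ⊆ pingPongX i := fun i =>
    Set.smul_set_subset_iff.mpr fun p hp => by
      fin_cases i
      exacts [mapGL_matA_smul_mem_pingPongX hp, mapGL_matB_smul_mem_pingPongX hp]
  have hpp := FreeGroup.injective_lift_of_ping_pong (moebiusPSL2Z ∘ g) pingPongX pingPongY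
    pingPongX_nonempty pairwise_disjoint_pingPongX pairwise_disjoint_pingPongY
    disjoint_pingPongX_pingPongY hX fun i => Set.inv_smul_compl_subset_of_smul_compl_subset (hX i)
  have hcomp : FreeGroup.lift (moebiusPSL2Z ∘ g) = moebiusPSL2Z.comp (FreeGroup.lift g) := by
    ext i; simp
  rw [hcomp, MonoidHom.coe_comp] at hpp
  exact hpp.of_comp

/-- `PSL(2,ℤ)[2]` is a free group of rank 2, generated by the images of
`[[1,2],[0,1]]` and `[[1,0],[2,1]]`. -/
theorem PSL2Level2_free_of_rank_two :
    PSL2Level2 = Subgroup.closure {toPSL2Z matA, toPSL2Z matB} ∧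
      Nonempty (PSL2Level2 ≃* FreeGroup (Fin 2)) := by
  refine ⟨PSL2Level2_eq_closure, ⟨?_⟩⟩
  have hrange : (FreeGroup.lift ![toPSL2Z matA, toPSL2Z matB]).range = PSL2Level2 := by
    rw [FreeGroup.range_lift_eq_closure, Matrix.range_cons_cons_empty, PSL2Level2_eq_closure]
  exact (MulEquiv.subgroupCongr hrange.symm).trans
    (MonoidHom.ofInjective injective_lift_toPSL2Z).symm
end
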